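/- arXiv:2305.09906 — 4 statements merged into one kernel-verified Lean document; each statement's English description precedes it below -/
import Mathlib

section
/- Let n = 2m for some m ∈ ℤ_{>0}, and fix a count vector v = (v₁₁, 1, 0, v₀₀) or v = (v₁₁, 0, 1, v₀₀) with entries summing to n. Then the probability mass function of T(v, Z) is symmetric–decreasing on the lattice m^{-1}ℤ. -/
open Finset

/-- Real value of a binary outcome. -/
noncomputable def b2r (b : Bool) : ℝ := if b then 1 else 0

/-- All assignments of `n` subjects in which exactly `m` receive treatment. -/
def Assign (n m : ℕ) : Finset (Fin n → Bool) :=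
  Finset.univ.filter fun z => (Finset.univ.filter fun i => z i = true).card = m

/-- Probability of the event `E` under the uniform distribution on `Assign n m`. -/
noncomputable def Pr (n m : ℕ) (E : (Fin n → Bool) → Prop) : ℝ :=
  haveI : DecidablePred E := fun z => Classical.propDecidable (E z)
  (((Assign n m).filter E).card : ℝ) / ((Assign n m).card : ℝ)

/-- The sample average treatment effect `τ(w)`.  For a table `w`, `(w i).1` is the
control potential outcome `w_i(0)` and `(w i).2` is the treatment potential outcome
`w_i(1)`. -/
noncomputable def sate (n : ℕ) (w : Fin n → Bool × Bool) : ℝ :=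
  (∑ j, (b2r (w j).2 - b2r (w j).1)) / (n : ℝ)

/-- Observed outcomes generated by the table `w` under the assignment `z`. -/
def obsOutcome (n : ℕ) (w : Fin n → Bool × Bool) (z : Fin n → Bool) : Fin n → Bool :=
  fun j => if z j then (w j).2 else (w j).1

/-- The Neyman difference-in-means estimator `T(Y, z)`. -/
noncomputable def neyman (n m : ℕ) (Y z : Fin n → Bool) : ℝ :=
  (∑ j, if z j then b2r (Y j) else 0) / (m : ℝ)
    - (∑ j, if z j then 0 else b2r (Y j)) / ((n : ℝ) - (m : ℝ))

/-- Permutation `p`-value of the table `w` given observed data `(Y, z)`. -/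
noncomputable def pval (n m : ℕ) (w : Fin n → Bool × Bool) (Y z : Fin n → Bool) : ℝ :=
  Pr n m fun z' =>
    |neyman n m (obsOutcome n w z') z' - sate n w| ≥ |neyman n m Y z - sate n w|

/-- The table `w` is possible given the observed data `(Y, z)`. -/
def PossibleTable (n : ℕ) (w : Fin n → Bool × Bool) (Y z : Fin n → Bool) : Prop :=
  ∀ j, (z j = true → (w j).2 = Y j) ∧ (z j = false → (w j).1 = Y j)

/-- Lower endpoint `L_α` of the exact confidence interval `I_α`. -/
noncomputable def Lb (n m : ℕ) (α : ℝ) (Y z : Fin n → Bool) : ℝ :=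
  sInf {t : ℝ | ∃ w, PossibleTable n w Y z ∧ α ≤ pval n m w Y z ∧ sate n w = t}

/-- Upper endpoint `U_α` of the exact confidence interval `I_α`. -/
noncomputable def Ub (n m : ℕ) (α : ℝ) (Y z : Fin n → Bool) : ℝ :=
  sSup {t : ℝ | ∃ w, PossibleTable n w Y z ∧ α ≤ pval n m w Y z ∧ sate n w = t}

/-- `vcount n w a b` is the number of subjects whose treatment potential outcome is `a`
and whose control potential outcome is `b`; e.g. `vcount n w true false = v₁₀`. -/
def vcount (n : ℕ) (w : Fin n → Bool × Bool) (a b : Bool) : ℕ :=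
  (Finset.univ.filter fun i => (w i).2 = a ∧ (w i).1 = b).card

/-- `ncount n Y z a b = n_{ab}`, the number of subjects with assignment `a` and
observed outcome `b`. -/
def ncount (n : ℕ) (Y z : Fin n → Bool) (a b : Bool) : ℕ :=
  (Finset.univ.filter fun j => z j = a ∧ Y j = b).card

/-- The pmf of the Neyman estimator `T(w, Z)` under the uniform random assignment. -/
noncomputable def pmfT (n m : ℕ) (w : Fin n → Bool × Bool) : ℝ → ℝ :=
  fun t => Pr n m fun z => neyman n m (obsOutcome n w z) z = t

/-- The lattice `m⁻¹ ℤ ⊆ ℝ`. -/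
def lattZ (m : ℕ) : Set ℝ := {x | ∃ k : ℤ, x = (k : ℝ) / (m : ℝ)}

/-- The lattice `m⁻¹ (2ℤ) ⊆ ℝ`. -/
def lattEven (m : ℕ) : Set ℝ := {x | ∃ k : ℤ, x = (2 * (k : ℝ)) / (m : ℝ)}

/-- The lattice `m⁻¹ (2ℤ + 1) ⊆ ℝ`. -/
def lattOdd (m : ℕ) : Set ℝ := {x | ∃ k : ℤ, x = (2 * (k : ℝ) + 1) / (m : ℝ)}

/-- `f` is symmetric about `μ` and decreasing away from `μ` along the lattice `L`
(symmetric–decreasing, SD). -/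
def SDon (f : ℝ → ℝ) (L : Set ℝ) (μ : ℝ) : Prop :=
  (∀ x : ℝ, μ + x ∈ L → f (μ - x) = f (μ + x)) ∧
    ∀ x y : ℝ, 0 ≤ x → x ≤ y → μ + x ∈ L → μ + y ∈ L → f (μ + y) ≤ f (μ + x)


lemma toNat_false' : (false : Bool).toNat = 0 := rfl
lemma toNat_true' : (true : Bool).toNat = 1 := rfl

section Count
variable {n m : ℕ} {A B : Finset (Fin n)} {s : Fin n}

lemma card_split (hAB : Disjoint A B) (hsA : s ∉ A) (hsB : s ∉ B)
    (hU : ∀ i, i ∈ A ∨ i ∈ B ∨ i = s) (z : Fin n → Bool) :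
    (univ.filter fun i => z i = true).card
      = (A.filter fun i => z i = true).card + (B.filter fun i => z i = true).card
        + (if z s then 1 else 0) := by
  classical
  have hsplit : (univ.filter fun i => z i = true)
      = (A.filter fun i => z i = true) ∪ (B.filter fun i => z i = true)
        ∪ (({s} : Finset (Fin n)).filter fun i => z i = true) := by
    ext i
    simp only [mem_filter, mem_union, mem_univ, true_and, mem_singleton]
    rcases hU i with h | h | h <;> constructor <;> intro hh <;> tauto
  rw [hsplit, card_union_of_disjoint, card_union_of_disjoint]
  · congr 1
    by_cases h : z s <;> simp [filter_singleton, h]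
  · exact disjoint_filter_filter hAB
  · refine disjoint_union_left.2 ⟨?_, ?_⟩ <;>
      refine disjoint_filter_filter (Finset.disjoint_singleton_right.2 ?_) <;> assumption

lemma count_empty (hAB : Disjoint A B) (hsA : s ∉ A) (hsB : s ∉ B)
    (hU : ∀ i, i ∈ A ∨ i ∈ B ∨ i = s) (S : ℕ) (e : Bool) (h : m < S + e.toNat) :
    ((Assign n m).filter fun z => (A.filter fun i => z i = true).card = S ∧ z s = e) = ∅ := by
  classical
  rw [Finset.eq_empty_iff_forall_notMem]
  rintro z hz
  simp only [Assign, mem_filter, mem_univ, true_and] at hz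
  obtain ⟨hm, hS, hse⟩ := hz
  have := card_split hAB hsA hsB hU z
  rw [hm, hS, hse] at this
  cases e <;> simp at this h <;> omega

lemma count_formula (hAB : Disjoint A B) (hsA : s ∉ A) (hsB : s ∉ B)
    (hU : ∀ i, i ∈ A ∨ i ∈ B ∨ i = s) (S : ℕ) (e : Bool) (hSe : S + e.toNat ≤ m) :
    (((Assign n m).filter fun z => (A.filter fun i => z i = true).card = S ∧ z s = e)).card
      = A.card.choose S * B.card.choose (m - S - e.toNat) := by
  classical
  rw [← Finset.card_powersetCard, ← Finset.card_powersetCard, ← Finset.card_product]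
  apply Finset.card_bij'
    (i := fun z _ => ((A.filter fun i => z i = true), (B.filter fun i => z i = true)))
    (j := fun p _ => fun i => decide (i ∈ p.1 ∨ i ∈ p.2 ∨ (i = s ∧ e = true)))
  · rintro z hz
    simp only [Assign, mem_filter, mem_univ, true_and] at hz
    obtain ⟨hm, hS, hse⟩ := hz
    have hsp := card_split hAB hsA hsB hU z
    rw [hm, hS, hse] at hsp
    simp only [mem_product, mem_powersetCard]
    refine ⟨⟨filter_subset _ _, hS⟩, ⟨filter_subset _ _, ?_⟩⟩
    cases e <;> simp at hsp ⊢ <;> omega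
  · rintro ⟨P, Q⟩ hp
    simp only [mem_product, mem_powersetCard] at hp
    obtain ⟨⟨hPA, hPc⟩, ⟨hQB, hQc⟩⟩ := hp
    simp only [Assign, mem_filter, mem_univ, true_and]
    have hPQ : Disjoint P Q := hAB.mono hPA hQB
    have hsP : s ∉ P := fun h => hsA (hPA h)
    have hsQ : s ∉ Q := fun h => hsB (hQB h)
    have hfilt : (univ.filter fun i =>
        (decide (i ∈ P ∨ i ∈ Q ∨ (i = s ∧ e = true))) = true)
        = P ∪ Q ∪ (if e then ({s} : Finset (Fin n)) else ∅) := by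
      ext i
      simp only [mem_filter, mem_univ, true_and, decide_eq_true_eq, mem_union]
      cases e <;> simp <;> tauto
    have hA : (A.filter fun i =>
        (decide (i ∈ P ∨ i ∈ Q ∨ (i = s ∧ e = true))) = true) = P := by
      ext i
      simp only [mem_filter, decide_eq_true_eq]
      constructor
      · rintro ⟨hiA, hi | hi | ⟨rfl, _⟩⟩
        · exact hi
        · exact absurd hiA (Finset.disjoint_right.1 hAB (hQB hi))
        · exact absurd hiA hsA
      · intro hi; exact ⟨hPA hi, Or.inl hi⟩
    have hB : (B.filter fun i =>
        (decide (i ∈ P ∨ i ∈ Q ∨ (i = s ∧ e = true))) = true) = Q := by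
      ext i
      simp only [mem_filter, decide_eq_true_eq]
      constructor
      · rintro ⟨hiB, hi | hi | ⟨rfl, _⟩⟩
        · exact absurd hiB (Finset.disjoint_left.1 hAB (hPA hi))
        · exact hi
        · exact absurd hiB hsB
      · intro hi; exact ⟨hQB hi, Or.inr (Or.inl hi)⟩
    refine ⟨?_, by rw [hA]; exact hPc, ?_⟩
    · rw [hfilt, card_union_of_disjoint, card_union_of_disjoint hPQ, hPc, hQc]
      · cases e <;> simp at hSe ⊢ <;> omega
      · refine disjoint_union_left.2 ⟨?_, ?_⟩ <;> cases e <;>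
          simp [Finset.disjoint_singleton_right, hsP, hsQ]
    · cases e <;> simp [hsP, hsQ]
  · rintro z hz
    simp only [Assign, mem_filter, mem_univ, true_and] at hz
    funext i
    simp only [mem_filter, decide_eq_true_eq]
    rcases hU i with h | h | h
    · have : i ≠ s := fun hh => hsA (hh ▸ h)
      have hiB : i ∉ B := Finset.disjoint_left.1 hAB h
      by_cases hzi : z i = true <;> simp [hzi, h, hiB, this]
    · have : i ≠ s := fun hh => hsB (hh ▸ h)
      have hiA : i ∉ A := Finset.disjoint_right.1 hAB h
      by_cases hzi : z i = true <;> simp [hzi, h, hiA, this]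
    · subst h
      rw [hz.2.2]
      by_cases he : e = true <;> simp [he, hsA, hsB]
  · rintro ⟨P, Q⟩ hp
    simp only [mem_product, mem_powersetCard] at hp
    obtain ⟨⟨hPA, hPc⟩, ⟨hQB, hQc⟩⟩ := hp
    have hA : (A.filter fun i =>
        (decide (i ∈ P ∨ i ∈ Q ∨ (i = s ∧ e = true))) = true) = P := by
      ext i
      simp only [mem_filter, decide_eq_true_eq]
      constructor
      · rintro ⟨hiA, hi | hi | ⟨rfl, _⟩⟩
        · exact hi
        · exact absurd hiA (Finset.disjoint_right.1 hAB (hQB hi))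
        · exact absurd hiA hsA
      · intro hi; exact ⟨hPA hi, Or.inl hi⟩
    have hB : (B.filter fun i =>
        (decide (i ∈ P ∨ i ∈ Q ∨ (i = s ∧ e = true))) = true) = Q := by
      ext i
      simp only [mem_filter, decide_eq_true_eq]
      constructor
      · rintro ⟨hiB, hi | hi | ⟨rfl, _⟩⟩
        · exact absurd hiB (Finset.disjoint_left.1 hAB (hPA hi))
        · exact hi
        · exact absurd hiB hsB
      · intro hi; exact ⟨hQB hi, Or.inr (Or.inl hi)⟩
    exact Prod.ext hA hB

end Count

section Cnt
variable {n m : ℕ} {A B : Finset (Fin n)} {s : Fin n}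

/-- Number of assignments on which `2*S + ε = K`. -/
def cnt (n m : ℕ) (A : Finset (Fin n)) (s : Fin n) (K : ℕ) : ℕ :=
  (((Assign n m).filter fun z =>
    2 * (A.filter fun i => z i = true).card + (if z s = true then 1 else 0) = K)).card

lemma cnt_eq (K : ℕ) :
    cnt n m A s K = (((Assign n m).filter fun z =>
      (A.filter fun i => z i = true).card = K / 2 ∧ z s = decide (K % 2 = 1))).card := by
  unfold cnt
  congr 1
  apply Finset.filter_congr
  intro z _
  by_cases hz : z s = true
  · rw [if_pos hz]
    constructor
    · intro hh
      have h1 : K % 2 = 1 := by omega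
      exact ⟨by omega, by rw [hz]; simp [h1]⟩
    · rintro ⟨h1, h2⟩
      rw [hz] at h2
      have h3 : K % 2 = 1 := by simpa using h2.symm
      omega
  · rw [if_neg hz]
    have hz' : z s = false := by simpa using hz
    constructor
    · intro hh
      have h1 : K % 2 = 0 := by omega
      refine ⟨by omega, by rw [hz']; simp; omega⟩
    · rintro ⟨h1, h2⟩
      rw [hz'] at h2
      have h3 : ¬ (K % 2 = 1) := by
        intro hc
        simp [hc] at h2
      omega

lemma cnt_succ_le (hAB : Disjoint A B) (hsA : s ∉ A) (hsB : s ∉ B)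
    (hU : ∀ i, i ∈ A ∨ i ∈ B ∨ i = s) (hab : A.card + B.card + 1 = 2 * m)
    (K : ℕ) (hK : A.card + 1 ≤ K) :
    cnt n m A s (K + 1) ≤ cnt n m A s K := by
  set a := A.card with ha
  set b := B.card with hb
  rw [cnt_eq, cnt_eq]
  set S := K / 2 with hS
  rcases Nat.even_or_odd K with ⟨c, hc⟩ | ⟨c, hc⟩
  · -- K even: K = 2S, step changes ε from 0 to 1
    have h2 : K % 2 = 0 := by omega
    have h2' : (K + 1) % 2 = 1 := by omega
    have hS2 : (K + 1) / 2 = S := by omega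
    have hKS : K = 2 * S := by omega
    rw [hS2]
    by_cases hSm : S + 1 ≤ m
    · rw [count_formula hAB hsA hsB hU S (decide (K % 2 = 1)) (by simp [h2]; omega),
        count_formula hAB hsA hsB hU S (decide ((K+1) % 2 = 1)) (by simp [h2']; omega)]
      simp only [h2, h2', decide_eq_true_eq]
      norm_num
      apply Nat.mul_le_mul_left
      have hlt : m - S - 1 < b / 2 := by omega
      have := Nat.choose_le_succ_of_lt_half_left hlt
      have heq : m - S - 1 + 1 = m - S - 0 := by omega
      rw [heq] at this
      simpa using this
    · rw [count_empty hAB hsA hsB hU S (decide ((K+1) % 2 = 1)) (by simp [h2']; omega)]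
      simp
  · -- K odd: K = 2S+1, step changes S to S+1, ε from 1 to 0
    have h2 : K % 2 = 1 := by omega
    have h2' : (K + 1) % 2 = 0 := by omega
    have hS2 : (K + 1) / 2 = S + 1 := by omega
    have hKS : K = 2 * S + 1 := by omega
    rw [hS2]
    by_cases hSm : S + 1 ≤ m
    · rw [count_formula hAB hsA hsB hU S (decide (K % 2 = 1)) (by simp [h2]; omega),
        count_formula hAB hsA hsB hU (S + 1) (decide ((K+1) % 2 = 1)) (by simp [h2']; omega)]
      simp only [h2, h2', decide_eq_true_eq]
      norm_num
      have heq2 : m - (S + 1) = m - S - 1 := by omega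
      rw [heq2]
      apply Nat.mul_le_mul_right
      by_cases hSa : S < a
      · rw [← Nat.choose_symm (by omega : S + 1 ≤ a), ← Nat.choose_symm (by omega : S ≤ a)]
        have hlt : a - (S + 1) < a / 2 := by omega
        have := Nat.choose_le_succ_of_lt_half_left hlt
        have heq : a - (S + 1) + 1 = a - S := by omega
        rwa [heq] at this
      · rw [Nat.choose_eq_zero_of_lt (by omega : a < S + 1)]
        exact Nat.zero_le _
    · rw [count_empty hAB hsA hsB hU (S + 1) (decide ((K+1) % 2 = 1)) (by simp [h2']; omega)]
      simp

lemma cnt_le (hAB : Disjoint A B) (hsA : s ∉ A) (hsB : s ∉ B)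
    (hU : ∀ i, i ∈ A ∨ i ∈ B ∨ i = s) (hab : A.card + B.card + 1 = 2 * m)
    (K L : ℕ) (hK : A.card + 1 ≤ K) (hKL : K ≤ L) :
    cnt n m A s L ≤ cnt n m A s K := by
  obtain ⟨d, rfl⟩ := Nat.exists_eq_add_of_le hKL
  clear hKL
  induction d with
  | zero => simp
  | succ d ih =>
    calc cnt n m A s (K + (d+1)) = cnt n m A s ((K + d) + 1) := by ring_nf
    _ ≤ cnt n m A s (K + d) := cnt_succ_le hAB hsA hsB hU hab _ (by omega)
    _ ≤ cnt n m A s K := ih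

end Cnt

section Semantic
variable {n m : ℕ}

lemma sate_eq (w : Fin n → Bool × Bool) (s : Fin n)
    (hrest : ∀ j, j ≠ s → (w j).1 = (w j).2) (δ : ℕ)
    (hδ : (w s = (false, true) ∧ δ = 0) ∨ (w s = (true, false) ∧ δ = 1)) :
    sate n w = (1 - 2 * (δ : ℝ)) / n := by
  unfold sate
  congr 1
  rw [Finset.sum_eq_single s]
  · rcases hδ with ⟨hws, hd⟩ | ⟨hws, hd⟩ <;> rw [hws, hd] <;> simp [b2r] <;> norm_num
  · intro j _ hj
    rw [hrest j hj]
    ring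
  · simp

lemma neyman_eq (hm : 0 < m) (hn : n = 2 * m) (w : Fin n → Bool × Bool) (s : Fin n)
    (hrest : ∀ j, j ≠ s → (w j).1 = (w j).2) (δ : ℕ)
    (hδ : (w s = (false, true) ∧ δ = 0) ∨ (w s = (true, false) ∧ δ = 1))
    (A : Finset (Fin n)) (hA : A = univ.filter fun j => ¬ (j = s) ∧ (w j).2 = true)
    (z : Fin n → Bool) :
    neyman n m (obsOutcome n w z) z =
      ((2 * (A.filter fun i => z i = true).card + (if z s = true then 1 else 0) : ℕ) : ℝ) / m
        - ((A.card + δ : ℕ) : ℝ) / m := by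
  have hsA : s ∉ A := by rw [hA]; simp
  have hm' : (m : ℝ) ≠ 0 := Nat.cast_ne_zero.2 hm.ne'
  have hnm : (n : ℝ) - m = m := by rw [hn]; push_cast; ring
  unfold neyman
  rw [hnm]
  have h1 : ∀ j, (if z j then b2r (obsOutcome n w z j) else 0)
      = if (z j = true ∧ (w j).2 = true) then (1:ℝ) else 0 := by
    intro j
    by_cases hj : z j <;> by_cases hw : (w j).2 = true <;>
      simp [obsOutcome, b2r, hj, hw]
  have h2 : ∀ j, (if z j then 0 else b2r (obsOutcome n w z j))
      = if (z j = false ∧ (w j).1 = true) then (1:ℝ) else 0 := by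
    intro j
    by_cases hj : z j <;> by_cases hw : (w j).1 = true <;>
      simp [obsOutcome, b2r, hj, hw]
  rw [Finset.sum_congr rfl (fun j _ => h1 j), Finset.sum_congr rfl (fun j _ => h2 j),
    Finset.sum_boole, Finset.sum_boole]
  set S := (A.filter fun i => z i = true).card with hSdef
  have hSle : S ≤ A.card := card_le_card (filter_subset _ _)
  have hAsplit : (A.filter fun i => z i = true).card + (A.filter fun i => ¬ (z i = true)).card
      = A.card := card_filter_add_card_filter_not _
  have hc : ((A.filter fun i => ¬ (z i = true)).card : ℝ) = (A.card : ℝ) - S := by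
    push_cast [← hAsplit]; ring
  set ε : ℕ := if z s = true then 1 else 0 with hεdef
  set η : ℕ := if z s = true then 0 else 1 with hηdef
  have hεη : (ε : ℝ) + (η : ℝ) = 1 := by
    by_cases hzs : z s = true <;> simp [hεdef, hηdef, hzs]
  have hsing1 : (({s} : Finset (Fin n)).filter fun i => z i = true).card = ε := by
    rw [filter_singleton]
    by_cases hzs : z s = true <;> simp [hzs, hεdef]
  have hsing2 : (({s} : Finset (Fin n)).filter fun i => ¬ (z i = true)).card = η := by
    rw [filter_singleton]
    by_cases hzs : z s = true <;> simp [hzs, hηdef]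
  rcases hδ with ⟨hws, hd⟩ | ⟨hws, hd⟩
  · -- δ = 0 : w s = (false, true)
    have hc1 : (univ.filter fun j => z j = true ∧ (w j).2 = true)
        = (A.filter fun i => z i = true) ∪ (({s} : Finset (Fin n)).filter fun i => z i = true) := by
      ext i
      by_cases his : i = s
      · subst his
        simp [hA, hws]
      · simp [hA, his]
        tauto
    have hc2 : (univ.filter fun j => z j = false ∧ (w j).1 = true)
        = A.filter fun i => ¬ (z i = true) := by
      ext i
      by_cases his : i = s
      · subst his
        simp [hA, hws]
      · have := hrest i his
        simp only [mem_filter, mem_univ, true_and, hA]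
        constructor
        · rintro ⟨hz1, hw1⟩
          refine ⟨⟨his, by rw [← this]; exact hw1⟩, by simp [hz1]⟩
        · rintro ⟨⟨_, hw2⟩, hz2⟩
          refine ⟨by simpa using hz2, by rw [this]; exact hw2⟩
    have hdisj : Disjoint (A.filter fun i => z i = true)
        (({s} : Finset (Fin n)).filter fun i => z i = true) :=
      disjoint_filter_filter (disjoint_singleton_right.2 hsA)
    rw [hc1, hc2, card_union_of_disjoint hdisj, hsing1, hd]
    push_cast
    rw [hc]
    field_simp
    ring
  · -- δ = 1 : w s = (true, false)
    have hc1 : (univ.filter fun j => z j = true ∧ (w j).2 = true)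
        = A.filter fun i => z i = true := by
      ext i
      by_cases his : i = s
      · subst his
        simp [hA, hws]
      · simp [hA, his]
        tauto
    have hc2 : (univ.filter fun j => z j = false ∧ (w j).1 = true)
        = (A.filter fun i => ¬ (z i = true)) ∪
          (({s} : Finset (Fin n)).filter fun i => ¬ (z i = true)) := by
      ext i
      by_cases his : i = s
      · subst his
        simp [hA, hws]
      · have := hrest i his
        simp only [mem_filter, mem_univ, true_and, hA, mem_union, mem_singleton]
        constructor
        · rintro ⟨hz1, hw1⟩
          left
          refine ⟨⟨his, by rw [← this]; exact hw1⟩, by simp [hz1]⟩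
        · rintro (⟨⟨_, hw2⟩, hz2⟩ | ⟨hs', _⟩)
          · refine ⟨by simpa using hz2, by rw [this]; exact hw2⟩
          · exact absurd hs' his
    have hdisj : Disjoint (A.filter fun i => ¬ (z i = true))
        (({s} : Finset (Fin n)).filter fun i => ¬ (z i = true)) :=
      disjoint_filter_filter (disjoint_singleton_right.2 hsA)
    rw [hc1, hc2, card_union_of_disjoint hdisj, hsing2, hd]
    push_cast
    rw [hc]
    field_simp
    linarith [hεη]

end Semantic

lemma card_filter_congr {α : Type*} {s : Finset α} {p q : α → Prop}
    [DecidablePred p] [DecidablePred q] (h : ∀ x ∈ s, p x ↔ q x) :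
    (s.filter p).card = (s.filter q).card := by
  apply congrArg
  ext x
  simp only [mem_filter]
  exact and_congr_right fun hx => h x hx

lemma flip_mem_assign {n m : ℕ} (hn : n = 2 * m) {z : Fin n → Bool}
    (hz : z ∈ Assign n m) : (fun i => !(z i)) ∈ Assign n m := by
  simp only [Assign, mem_filter, mem_univ, true_and] at hz ⊢
  have hset : (univ.filter fun i => (!(z i)) = true)
      = univ \ (univ.filter fun i => z i = true) := by
    ext i; simp
  rw [hset, card_sdiff_of_subset (filter_subset _ _), card_univ, Fintype.card_fin, hz]
  omega

theorem stmt13' (m : ℕ) (hm : 0 < m) (n : ℕ) (hn : n = 2 * m)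
    (w : Fin n → Bool × Bool)
    (h : (vcount n w true false = 1 ∧ vcount n w false true = 0) ∨
      (vcount n w true false = 0 ∧ vcount n w false true = 1)) :
    SDon (pmfT n m w) (lattZ m) (sate n w) := by
  classical
  -- extract the special subject and the case index δ
  obtain ⟨s, δ, hδ, hrest⟩ : ∃ (s : Fin n) (δ : ℕ),
      ((w s = (false, true) ∧ δ = 0) ∨ (w s = (true, false) ∧ δ = 1)) ∧
      ∀ j, j ≠ s → (w j).1 = (w j).2 := by
    rcases h with ⟨h1, h0⟩ | ⟨h0, h1⟩
    · rw [vcount, Finset.card_eq_one] at h1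
      obtain ⟨s, hs⟩ := h1
      rw [vcount, Finset.card_eq_zero] at h0
      have hsmem : s ∈ Finset.univ.filter fun i => (w i).2 = true ∧ (w i).1 = false := by
        rw [hs]; exact mem_singleton_self s
      simp only [mem_filter, mem_univ, true_and] at hsmem
      refine ⟨s, 0, Or.inl ⟨Prod.ext hsmem.2 hsmem.1, rfl⟩, ?_⟩
      intro j hj
      have hnot1 : ¬ ((w j).2 = true ∧ (w j).1 = false) := by
        intro hc
        have : j ∈ Finset.univ.filter fun i => (w i).2 = true ∧ (w i).1 = false := by
          simp [hc.1, hc.2]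
        rw [hs] at this
        exact hj (mem_singleton.1 this)
      have hnot2 : ¬ ((w j).2 = false ∧ (w j).1 = true) := by
        intro hc
        have : j ∈ Finset.univ.filter fun i => (w i).2 = false ∧ (w i).1 = true := by
          simp [hc.1, hc.2]
        rw [h0] at this
        exact absurd this (notMem_empty j)
      cases hw2 : (w j).2 <;> cases hw1 : (w j).1 <;> simp_all
    · rw [vcount, Finset.card_eq_one] at h1
      obtain ⟨s, hs⟩ := h1
      rw [vcount, Finset.card_eq_zero] at h0
      have hsmem : s ∈ Finset.univ.filter fun i => (w i).2 = false ∧ (w i).1 = true := by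
        rw [hs]; exact mem_singleton_self s
      simp only [mem_filter, mem_univ, true_and] at hsmem
      refine ⟨s, 1, Or.inr ⟨Prod.ext hsmem.2 hsmem.1, rfl⟩, ?_⟩
      intro j hj
      have hnot1 : ¬ ((w j).2 = false ∧ (w j).1 = true) := by
        intro hc
        have : j ∈ Finset.univ.filter fun i => (w i).2 = false ∧ (w i).1 = true := by
          simp [hc.1, hc.2]
        rw [hs] at this
        exact hj (mem_singleton.1 this)
      have hnot2 : ¬ ((w j).2 = true ∧ (w j).1 = false) := by
        intro hc
        have : j ∈ Finset.univ.filter fun i => (w i).2 = true ∧ (w i).1 = false := by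
          simp [hc.1, hc.2]
        rw [h0] at this
        exact absurd this (notMem_empty j)
      cases hw2 : (w j).2 <;> cases hw1 : (w j).1 <;> simp_all
  have hδnat : δ = 0 ∨ δ = 1 := by rcases hδ with ⟨_, hd⟩ | ⟨_, hd⟩ <;> omega
  set A : Finset (Fin n) := univ.filter (fun j => ¬ (j = s) ∧ (w j).2 = true) with hA
  set B : Finset (Fin n) := univ.filter (fun j => ¬ (j = s) ∧ (w j).2 = false) with hB
  have hAB : Disjoint A B := by
    rw [Finset.disjoint_left]
    intro i hiA hiB
    rw [hA] at hiA
    rw [hB] at hiB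
    simp only [mem_filter] at hiA hiB
    rw [hiA.2.2] at hiB
    exact absurd hiB.2.2 (by simp)
  have hsA : s ∉ A := by rw [hA]; simp
  have hsB : s ∉ B := by rw [hB]; simp
  have hU : ∀ i, i ∈ A ∨ i ∈ B ∨ i = s := by
    intro i
    by_cases his : i = s
    · right; right; exact his
    · cases hw2 : (w i).2
      · right; left; rw [hB]; simp [his, hw2]
      · left; rw [hA]; simp [his, hw2]
  have hab : A.card + B.card + 1 = 2 * m := by
    have hun : A ∪ B = univ.erase s := by
      ext i
      simp only [mem_union, mem_erase, mem_univ, and_true, hA, hB, mem_filter, true_and]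
      constructor
      · rintro (⟨hi, _⟩ | ⟨hi, _⟩) <;> exact hi
      · intro hi
        cases hw2 : (w i).2
        · right; exact ⟨hi, rfl⟩
        · left; exact ⟨hi, rfl⟩
    have h1 := card_union_of_disjoint hAB
    rw [hun, card_erase_of_mem (mem_univ s), card_univ, Fintype.card_fin] at h1
    omega
  have hm' : (m : ℝ) ≠ 0 := Nat.cast_ne_zero.2 hm.ne'
  have hncast : (n : ℝ) = 2 * m := by rw [hn]; push_cast; ring
  have hT := fun z => neyman_eq hm hn w s hrest δ hδ A hA z
  have hsate := sate_eq w s hrest δ hδ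
  -- the flip identity
  have hflipT : ∀ z : Fin n → Bool,
      neyman n m (obsOutcome n w (fun i => !(z i))) (fun i => !(z i))
        = 2 * sate n w - neyman n m (obsOutcome n w z) z := by
    intro z
    rw [hT z, hT (fun i => !(z i)), hsate]
    have hfil : (A.filter fun i => (!(z i)) = true) = A.filter (fun i => ¬ (z i = true)) := by
      ext i; simp
    have hflipS : ((A.filter fun i => (!(z i)) = true).card : ℝ)
        = (A.card : ℝ) - ((A.filter fun i => z i = true).card : ℝ) := by
      rw [hfil]
      have := card_filter_add_card_filter_not (s := A) (p := fun i => z i = true)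
      push_cast [← this]
      ring
    push_cast
    rw [hflipS, hncast]
    by_cases hzs : z s = true <;> simp only [hzs, Bool.not_true, Bool.not_false] <;> norm_num <;>
      field_simp <;> ring
  constructor
  · -- symmetry
    intro x _
    unfold pmfT Pr
    congr 1
    have hkey : ∀ t t' : ℝ, t + t' = 2 * sate n w →
        ((Assign n m).filter fun z => neyman n m (obsOutcome n w z) z = t).card
          = ((Assign n m).filter fun z => neyman n m (obsOutcome n w z) z = t').card := by
      intro t t' htt
      apply Finset.card_bij' (i := fun z _ => fun i => !(z i)) (j := fun z _ => fun i => !(z i))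
      · intro z hz
        simp only [mem_filter] at hz ⊢
        refine ⟨flip_mem_assign hn hz.1, ?_⟩
        rw [hflipT z, hz.2]
        linarith
      · intro z hz
        simp only [mem_filter] at hz ⊢
        refine ⟨flip_mem_assign hn hz.1, ?_⟩
        rw [hflipT z, hz.2]
        linarith
      · intro z _; funext i; simp
      · intro z _; funext i; simp
    exact congrArg _ (hkey _ _ (by ring))
  · -- decreasing
    intro x y hx hxy hxL hyL
    obtain ⟨kx, hkx⟩ := hxL
    obtain ⟨ky, hky⟩ := hyL
    have hμval : sate n w = (1 - 2 * (δ:ℝ)) / (2 * m) := by rw [hsate, hncast]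
    have hkx1 : 1 ≤ kx + δ := by
      have h1 : (1 - 2 * (δ:ℝ)) / (2 * m) ≤ (kx : ℝ) / m := by
        rw [← hμval, ← hkx]; linarith
      have h2 : (1 - 2 * (δ:ℝ)) ≤ 2 * (kx : ℝ) := by
        have hmpos : (0:ℝ) < m := by exact_mod_cast hm
        rw [div_le_div_iff₀ (by positivity) (by positivity)] at h1
        nlinarith
      have h3 : (1 : ℤ) - 2 * δ ≤ 2 * kx := by exact_mod_cast h2
      omega
    have hkxy : kx ≤ ky := by
      have h1 : (kx : ℝ) / m ≤ (ky : ℝ) / m := by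
        rw [← hkx, ← hky]; linarith
      have h2 : (kx : ℝ) ≤ ky := by
        rwa [div_le_div_iff_of_pos_right (by positivity)] at h1
      exact_mod_cast h2
    -- event identification
    have hev : ∀ (k : ℤ), 1 ≤ k + δ → ∀ z : Fin n → Bool,
        (neyman n m (obsOutcome n w z) z = (k : ℝ) / m ↔
          2 * (A.filter fun i => z i = true).card + (if z s = true then 1 else 0)
            = (k + A.card + δ).toNat) := by
      intro k hk z
      rw [hT z]
      have hcast : ∀ u v : ℕ, ((u : ℝ) / m - (v : ℝ) / m = (k:ℝ)/m) ↔ ((u:ℤ) - v = k) := by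
        intro u v
        constructor
        · intro hq
          have : (u : ℝ) - v = k := by
            field_simp at hq
            linarith
          exact_mod_cast this
        · intro hq
          have : (u : ℝ) - v = k := by exact_mod_cast hq
          field_simp
          linarith
      rw [hcast]
      omega
    unfold pmfT Pr
    rw [hkx, hky]
    apply div_le_div_of_nonneg_right ?_ (Nat.cast_nonneg _)
    have hnum : ((Assign n m).filter fun z =>
          neyman n m (obsOutcome n w z) z = (ky : ℝ)/m).card ≤
          ((Assign n m).filter fun z =>
          neyman n m (obsOutcome n w z) z = (kx : ℝ)/m).card := by
        have hky1 : 1 ≤ ky + δ := by omega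
        have hex : ((Assign n m).filter fun z =>
            neyman n m (obsOutcome n w z) z = (kx : ℝ)/m).card
            = cnt n m A s (kx + A.card + δ).toNat := by
          unfold cnt
          exact card_filter_congr fun z _ => hev kx hkx1 z
        have hey : ((Assign n m).filter fun z =>
            neyman n m (obsOutcome n w z) z = (ky : ℝ)/m).card
            = cnt n m A s (ky + A.card + δ).toNat := by
          unfold cnt
          exact card_filter_congr fun z _ => hev ky hky1 z
        rw [hex, hey]
        apply cnt_le hAB hsA hsB hU hab
        · omega
        · omega
    exact_mod_cast hnum

/-- In a balanced design, for a count vector of the form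
`v = (v₁₁, 1, 0, v₀₀)` or `v = (v₁₁, 0, 1, v₀₀)`, the pmf of `T(v, Z)` is
symmetric–decreasing on the lattice `m⁻¹ℤ`. -/
theorem stmt13 (m : ℕ) (hm : 0 < m) (n : ℕ) (hn : n = 2 * m)
    (w : Fin n → Bool × Bool)
    (h : (vcount n w true false = 1 ∧ vcount n w false true = 0) ∨
      (vcount n w true false = 0 ∧ vcount n w false true = 1)) :
    SDon (pmfT n m w) (lattZ m) (sate n w) := by
  exact stmt13' m hm n hn w h
end

section
/- Let n = 2m for some m ∈ ℤ_{>0}, and fix a count vector v = (v₁₁, 2, 0, v₀₀) with entries summing to n. Then the probability mass function of T(v, Z) is symmetric–decreasing on the lattice m^{-1}ℤ. -/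
/-!
Write `a = v₁₁`, `c = v₀₀`, and let `X`, `S` be the numbers of treated units of type
`(1,1)` and `(1,0)`. Then `τ = 1/m` and `m T = 2X + S - a`. Complementing the assignment
turns `T` into `2τ - T` for every table of a balanced design, which gives the symmetry.
There are `C(a,x) C(2,s) C(c,m-x-s)` assignments with `X = x`, `S = s`, and once `2X + S`
exceeds `a`, the count for `2X + S = K + 1` is dominated term by term by the count for `K`,
through `C(a,x+1) ≤ C(a,x)` for `a ≤ 2x+1` and `C(c,j) ≤ C(c,j+1)` for `2j+1 ≤ c`.
-/

open Finset

namespace Nat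

theorem choose_succ_le_choose_of_le {n k : ℕ} (h : n ≤ 2 * k + 1) :
    n.choose (k + 1) ≤ n.choose k := by
  refine Nat.le_of_mul_le_mul_right ?_ k.succ_pos
  rw [choose_succ_right_eq]
  exact Nat.mul_le_mul_left _ (by omega)

theorem choose_le_choose_succ_of_le {n k : ℕ} (h : 2 * k + 1 ≤ n) :
    n.choose k ≤ n.choose (k + 1) := by
  refine Nat.le_of_mul_le_mul_right ?_ k.succ_pos
  rw [choose_succ_right_eq]
  exact Nat.mul_le_mul_left _ (by omega)

end Nat

theorem card_boolFun_fiber_counts_eq_prod_choose {ι κ : Type*} [Fintype ι] [DecidableEq ι]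
    [Fintype κ] [DecidableEq κ] (f : ι → κ) (x : κ → ℕ) :
    #{z : ι → Bool | ∀ k, #{i | f i = k ∧ z i = true} = x k}
      = ∏ k, (#{i | f i = k}).choose (x k) := by
  simp_rw [← card_powersetCard, ← Fintype.card_piFinset]
  have fiber_eq : ∀ t ∈ Fintype.piFinset fun k => powersetCard (x k) {i | f i = k}, ∀ k,
      ({i | f i = k ∧ decide (i ∈ t (f i)) = true} : Finset ι) = t k := by
    intro t ht k
    simp only [Fintype.mem_piFinset, mem_powersetCard, subset_iff, mem_filter, mem_univ,
      true_and] at ht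
    ext i
    simp only [mem_filter, mem_univ, true_and, decide_eq_true_eq]
    exact ⟨fun ⟨h, hi⟩ => h ▸ hi, fun hi => ⟨(ht k).1 hi, (ht k).1 hi ▸ hi⟩⟩
  refine card_bij' (fun z _ k => {i | f i = k ∧ z i = true})
    (fun t _ i => decide (i ∈ t (f i))) ?_ ?_ ?_ ?_
  · intro z hz
    simp only [mem_filter, mem_univ, true_and] at hz
    simp only [Fintype.mem_piFinset, mem_powersetCard]
    exact fun k => ⟨fun i hi => by simp_all, hz k⟩
  · intro t ht
    simp only [mem_filter, mem_univ, true_and, fiber_eq t ht]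
    simp only [Fintype.mem_piFinset, mem_powersetCard] at ht
    exact fun k => (ht k).2
  · intro z _
    funext i
    simp
  · intro t ht
    funext k
    exact fiber_eq t ht k

/-- The `if` guards the truncated subtraction `m - x - s`. -/
def assignCount (a b c m x s : ℕ) : ℕ :=
  if x + s ≤ m then a.choose x * b.choose s * c.choose (m - x - s) else 0

theorem assignCount_of_add_eq {a b c m : ℕ} (x s u : ℕ) (h : x + s + u = m) :
    assignCount a b c m x s = a.choose x * b.choose s * c.choose u := by
  rw [assignCount, if_pos (by omega), show m - x - s = u by omega]

theorem assignCount_of_lt {a b c m x s : ℕ} (h : m < x + s) : assignCount a b c m x s = 0 :=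
  if_neg (by omega)

theorem assignCount_even_le_odd {a c m x : ℕ} (hm : a + 2 + c = 2 * m) (hx : a ≤ 2 * x) :
    assignCount a 2 c m (x + 1) 0 + assignCount a 2 c m x 2 ≤ assignCount a 2 c m x 1 := by
  have hA := Nat.choose_succ_le_choose_of_le (n := a) (k := x) (by omega)
  rcases lt_or_ge m (x + 2) with hx2 | hx2
  · rcases lt_or_ge m (x + 1) with hx1 | hx1
    · simp [assignCount_of_lt, hx1, hx2]
    · rw [assignCount_of_add_eq (x + 1) 0 0 (by omega), assignCount_of_add_eq x 1 0 (by omega),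
        assignCount_of_lt hx2]
      simp only [Nat.choose_zero_right, Nat.choose_one_right]
      omega
  · obtain ⟨j, rfl⟩ := Nat.exists_eq_add_of_le hx2
    have hC := Nat.choose_le_choose_succ_of_le (n := c) (k := j) (by omega)
    rw [assignCount_of_add_eq (x + 1) 0 (j + 1) (by omega),
      assignCount_of_add_eq x 2 j (by omega), assignCount_of_add_eq x 1 (j + 1) (by omega)]
    simp only [Nat.choose_zero_right, Nat.choose_one_right, Nat.choose_self]
    nlinarith [Nat.mul_le_mul_right (c.choose (j + 1)) hA, Nat.mul_le_mul_left (a.choose x) hC]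

theorem assignCount_odd_le_even {a c m x : ℕ} (hm : a + 2 + c = 2 * m) (hx : a ≤ 2 * x + 1) :
    assignCount a 2 c m (x + 1) 1 ≤ assignCount a 2 c m (x + 1) 0 + assignCount a 2 c m x 2 := by
  rcases lt_or_ge m (x + 2) with hx2 | hx2
  · simp [assignCount_of_lt, hx2]
  · obtain ⟨j, rfl⟩ := Nat.exists_eq_add_of_le hx2
    have hA := Nat.choose_succ_le_choose_of_le (n := a) (k := x) (by omega)
    have hC := Nat.choose_le_choose_succ_of_le (n := c) (k := j) (by omega)
    rw [assignCount_of_add_eq (x + 1) 1 j (by omega),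
      assignCount_of_add_eq (x + 1) 0 (j + 1) (by omega), assignCount_of_add_eq x 2 j (by omega)]
    simp only [Nat.choose_zero_right, Nat.choose_one_right, Nat.choose_self]
    nlinarith [Nat.mul_le_mul_left (a.choose (x + 1)) hC, Nat.mul_le_mul_right (c.choose j) hA]

section PotentialOutcomes

variable {n m : ℕ} {w : Fin n → Bool × Bool}

def treatedOfType (w : Fin n → Bool × Bool) (z : Fin n → Bool) (k : Bool × Bool) : ℕ :=
  #{i | w i = k ∧ z i = true}

theorem vcount_eq_card (w : Fin n → Bool × Bool) (a b : Bool) :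
    vcount n w a b = #{i | w i = (b, a)} := by
  simp only [vcount, Prod.ext_iff, and_comm]

theorem card_true_eq_sum_treatedOfType (w : Fin n → Bool × Bool) (z : Fin n → Bool) :
    #{i | z i = true} = ∑ k, treatedOfType w z k := by
  rw [card_eq_sum_card_fiberwise (f := w) (t := univ) (fun _ _ => mem_univ _)]
  simp only [treatedOfType, filter_filter, and_comm]

theorem treatedOfType_le_vcount (w : Fin n → Bool × Bool) (z : Fin n → Bool) (a b : Bool) :
    treatedOfType w z (b, a) ≤ vcount n w a b := by
  simp only [treatedOfType, vcount_eq_card, ← filter_filter]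
  exact card_filter_le _ _

theorem compl_mem_assign (hn : n = 2 * m) {z : Fin n → Bool} (hz : z ∈ Assign n m) :
    (fun i => !z i) ∈ Assign n m := by
  simp only [Assign, mem_filter, mem_univ, true_and, Bool.not_eq_true'] at hz ⊢
  have := card_filter_add_card_filter_not (s := univ) (fun i => z i = true)
  simp only [card_univ, Fintype.card_fin, Bool.not_eq_true] at this
  omega

theorem neyman_compl_add_neyman (hn : n = 2 * m) (w : Fin n → Bool × Bool)
    (z : Fin n → Bool) :
    neyman n m (obsOutcome n w fun i => !z i) (fun i => !z i) + neyman n m (obsOutcome n w z) z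
      = 2 * sate n w := by
  have treated : (∑ j, if !z j then b2r (obsOutcome n w (fun i => !z i) j) else 0)
      + (∑ j, if z j then b2r (obsOutcome n w z j) else 0) = ∑ j, b2r (w j).2 := by
    rw [← sum_add_distrib]
    exact sum_congr rfl fun j _ => by cases h : z j <;> simp [obsOutcome, h]
  have control : (∑ j, if !z j then 0 else b2r (obsOutcome n w (fun i => !z i) j))
      + (∑ j, if z j then 0 else b2r (obsOutcome n w z j)) = ∑ j, b2r (w j).1 := by
    rw [← sum_add_distrib]
    exact sum_congr rfl fun j _ => by cases h : z j <;> simp [obsOutcome, h]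
  have hnm : (n : ℝ) = 2 * m := by rw [hn]; push_cast; ring
  rw [neyman, neyman, sate, sum_sub_distrib, ← treated, ← control, hnm]
  ring

theorem pmfT_sate_sub (hn : n = 2 * m) (w : Fin n → Bool × Bool) (x : ℝ) :
    pmfT n m w (sate n w - x) = pmfT n m w (sate n w + x) := by
  simp only [pmfT, Pr]
  congr 2
  refine card_bij' (fun z _ i => !z i) (fun z _ i => !z i) ?_ ?_ (fun z _ => by simp)
    (fun z _ => by simp) <;>
  · intro z hz
    rw [mem_filter] at hz ⊢
    exact ⟨compl_mem_assign hn hz.1, by linarith [neyman_compl_add_neyman hn w z]⟩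

theorem ne_of_vcount_eq_zero {a b : Bool} (h : vcount n w a b = 0) (i : Fin n) :
    w i ≠ (b, a) := by
  rw [vcount_eq_card, card_eq_zero, filter_eq_empty_iff] at h
  exact h (mem_univ i)

theorem treatedOfType_eq_zero_of_vcount_eq_zero {a b : Bool} (h : vcount n w a b = 0)
    (z : Fin n → Bool) : treatedOfType w z (b, a) = 0 :=
  Nat.eq_zero_of_le_zero (h ▸ treatedOfType_le_vcount w z a b)

theorem card_true_eq_of_vcount_eq_zero (h01 : vcount n w false true = 0) (z : Fin n → Bool) :
    #{i | z i = true} = treatedOfType w z (true, true) + treatedOfType w z (false, true)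
      + treatedOfType w z (false, false) := by
  rw [card_true_eq_sum_treatedOfType w z, Fintype.sum_prod_type]
  simp only [Fintype.sum_bool, treatedOfType_eq_zero_of_vcount_eq_zero h01]
  ring

theorem vcount_add_vcount_add_vcount (h01 : vcount n w false true = 0) :
    vcount n w true true + vcount n w true false + vcount n w false false = n := by
  simpa [treatedOfType, vcount_eq_card] using
    (card_true_eq_of_vcount_eq_zero h01 fun _ => true).symm

def score (w : Fin n → Bool × Bool) (z : Fin n → Bool) : ℕ :=
  2 * treatedOfType w z (true, true) + treatedOfType w z (false, true)

theorem neyman_eq_score (hn : n = 2 * m) (h01 : vcount n w false true = 0)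
    (z : Fin n → Bool) :
    neyman n m (obsOutcome n w z) z = ((score w z : ℝ) - vcount n w true true) / m := by
  have hnm : (n : ℝ) - m = m := by rw [hn]; push_cast; ring
  rw [neyman, hnm, div_sub_div_same]
  congr 1
  simp only [score, treatedOfType, vcount_eq_card, Nat.cast_add, Nat.cast_mul,
    natCast_card_filter]
  rw [mul_sum, ← sum_add_distrib, ← sum_sub_distrib, ← sum_sub_distrib]
  refine sum_congr rfl fun j _ => ?_
  have := ne_of_vcount_eq_zero h01 j
  unfold obsOutcome
  generalize w j = p at this ⊢
  obtain ⟨c, t⟩ := p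
  cases c <;> cases t <;> cases z j <;> norm_num [b2r] at *

theorem sate_eq_s14 (hn : n = 2 * m) (h10 : vcount n w true false = 2)
    (h01 : vcount n w false true = 0) : sate n w = 1 / m := by
  have unit_effect : ∀ j, b2r (w j).2 - b2r (w j).1 = if w j = (false, true) then 1 else 0 := by
    intro j
    have := ne_of_vcount_eq_zero h01 j
    generalize w j = p at this ⊢
    obtain ⟨c, t⟩ := p
    cases c <;> cases t <;> simp_all [b2r]
  simp only [sate, unit_effect, sum_boole, ← vcount_eq_card, h10, hn]
  push_cast
  ring

theorem card_filter_assign_treatedOfType (h01 : vcount n w false true = 0) (x s : ℕ) :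
    #{z ∈ Assign n m | treatedOfType w z (true, true) = x ∧ treatedOfType w z (false, true) = s}
      = assignCount (vcount n w true true) (vcount n w true false) (vcount n w false false)
          m x s := by
  rcases le_or_gt (x + s) m with hxs | hxs
  · let y : Bool × Bool → ℕ
      | (true, true) => x
      | (false, true) => s
      | (false, false) => m - x - s
      | (true, false) => 0
    have hset : ({z ∈ Assign n m | treatedOfType w z (true, true) = x ∧
        treatedOfType w z (false, true) = s} : Finset (Fin n → Bool)) =
        ({z : Fin n → Bool | ∀ k, #{i | w i = k ∧ z i = true} = y k} : Finset _) := by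
      ext z
      have htot := card_true_eq_of_vcount_eq_zero h01 z
      have hTF := treatedOfType_eq_zero_of_vcount_eq_zero h01 z
      rw [mem_filter]
      simp only [Assign, treatedOfType, mem_filter, mem_univ, true_and, Prod.forall,
        Bool.forall_bool, y] at htot hTF ⊢
      omega
    rw [assignCount_of_add_eq x s (m - x - s) (by omega), hset,
      card_boolFun_fiber_counts_eq_prod_choose, Fintype.prod_prod_type]
    simp only [Fintype.prod_bool, ← vcount_eq_card, h01, y, Nat.choose_zero_right]
    ring
  · rw [assignCount_of_lt hxs, card_eq_zero, filter_eq_empty_iff]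
    intro z hz
    simp only [Assign, mem_filter, mem_univ, true_and] at hz
    have := card_true_eq_of_vcount_eq_zero h01 z
    omega

theorem card_score_eq_odd (h10 : vcount n w true false = 2) (h01 : vcount n w false true = 0)
    (x : ℕ) :
    #{z ∈ Assign n m | score w z = 2 * x + 1}
      = assignCount (vcount n w true true) 2 (vcount n w false false) m x 1 := by
  have count := card_filter_assign_treatedOfType (m := m) h01
  rw [h10] at count
  rw [← count]
  congr 1
  refine filter_congr fun z _ => ?_
  have := h10 ▸ treatedOfType_le_vcount w z true false
  simp only [score]
  omega

theorem card_score_eq_even (h10 : vcount n w true false = 2) (h01 : vcount n w false true = 0)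
    (x : ℕ) :
    #{z ∈ Assign n m | score w z = 2 * x + 2}
      = assignCount (vcount n w true true) 2 (vcount n w false false) m (x + 1) 0
        + assignCount (vcount n w true true) 2 (vcount n w false false) m x 2 := by
  have count := card_filter_assign_treatedOfType (m := m) h01
  rw [h10] at count
  rw [← count, ← count, ← card_union_of_disjoint (disjoint_filter.2 fun z _ h h' => by omega),
    ← filter_or]
  congr 1
  refine filter_congr fun z _ => ?_
  have := h10 ▸ treatedOfType_le_vcount w z true false
  simp only [score]
  omega

theorem card_score_succ_le (hn : n = 2 * m) (h10 : vcount n w true false = 2)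
    (h01 : vcount n w false true = 0) {K : ℕ} (hK : vcount n w true true + 1 ≤ K) :
    #{z ∈ Assign n m | score w z = K + 1} ≤ #{z ∈ Assign n m | score w z = K} := by
  have hm : vcount n w true true + 2 + vcount n w false false = 2 * m := by
    have := vcount_add_vcount_add_vcount h01
    omega
  obtain ⟨x, rfl | rfl⟩ := Nat.even_or_odd' K
  · obtain ⟨x, rfl⟩ : ∃ y, x = y + 1 := ⟨x - 1, by omega⟩
    calc #{z ∈ Assign n m | score w z = 2 * (x + 1) + 1}
        = assignCount (vcount n w true true) 2 (vcount n w false false) m (x + 1) 1 :=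
          card_score_eq_odd h10 h01 _
      _ ≤ _ := assignCount_odd_le_even hm (by omega)
      _ = #{z ∈ Assign n m | score w z = 2 * (x + 1)} := (card_score_eq_even h10 h01 x).symm
  · rw [show 2 * x + 1 + 1 = 2 * x + 2 by ring, card_score_eq_odd h10 h01,
      card_score_eq_even h10 h01]
    exact assignCount_even_le_odd hm (by omega)

theorem pmfT_eq_card_score (hn : n = 2 * m) (hm : 0 < m) (h01 : vcount n w false true = 0)
    (K : ℕ) :
    pmfT n m w (((K : ℝ) - vcount n w true true) / m)
      = #{z ∈ Assign n m | score w z = K} / #(Assign n m) := by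
  have hm' : (m : ℝ) ≠ 0 := by positivity
  simp only [pmfT, Pr, neyman_eq_score hn h01, div_left_inj' hm', sub_left_inj, Nat.cast_inj]

theorem pmfT_intCast_div_antitone (hn : n = 2 * m) (hm : 0 < m) (h10 : vcount n w true false = 2)
    (h01 : vcount n w false true = 0) {k k' : ℤ} (hk : 1 ≤ k) (hkk : k ≤ k') :
    pmfT n m w (k' / m) ≤ pmfT n m w (k / m) := by
  obtain ⟨K, hK⟩ := Int.eq_ofNat_of_zero_le (show 0 ≤ k + vcount n w true true by omega)
  obtain ⟨K', hK'⟩ := Int.eq_ofNat_of_zero_le (show 0 ≤ k' + vcount n w true true by omega)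
  have hcast : ∀ (j : ℤ) (J : ℕ), j + vcount n w true true = J →
      (j : ℝ) = (J : ℝ) - vcount n w true true := fun j J h => by
    rw [eq_sub_iff_add_eq]; exact_mod_cast h
  rw [hcast k K hK, hcast k' K' hK', pmfT_eq_card_score hn hm h01, pmfT_eq_card_score hn hm h01]
  refine div_le_div_of_nonneg_right (Nat.cast_le.2 ?_) (Nat.cast_nonneg _)
  refine antitoneOn_nat_Ici_of_succ_le (k := vcount n w true true + 1)
    (f := fun K => #{z ∈ Assign n m | score w z = K})
    (fun _ hj => card_score_succ_le hn h10 h01 hj) ?_ ?_ (by omega) <;>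
    simp only [Set.mem_ofPred_eq] <;> omega

end PotentialOutcomes

/-- In a balanced design, for a count vector of the form
`v = (v₁₁, 2, 0, v₀₀)`, the pmf of `T(v, Z)` is symmetric–decreasing on the lattice
`m⁻¹ℤ`. -/
theorem stmt14 (m : ℕ) (hm : 0 < m) (n : ℕ) (hn : n = 2 * m)
    (w : Fin n → Bool × Bool)
    (h10 : vcount n w true false = 2) (h01 : vcount n w false true = 0) :
    SDon (pmfT n m w) (lattZ m) (sate n w) := by
  refine ⟨fun x _ => pmfT_sate_sub hn w x, ?_⟩
  rintro x y hx hxy ⟨k, hk⟩ ⟨k', hk'⟩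
  have hm' : (0 : ℝ) < m := by exact_mod_cast hm
  rw [sate_eq_s14 hn h10 h01] at hk hk' ⊢
  rw [hk, hk']
  refine pmfT_intCast_div_antitone hn hm h10 h01 ?_ ?_
  · have : (1 : ℝ) ≤ k := by
      rw [← div_le_div_iff_of_pos_right hm', ← hk]; linarith
    exact_mod_cast this
  · have : (k : ℝ) ≤ k' := by
      rw [← div_le_div_iff_of_pos_right hm', ← hk, ← hk']; linarith
    exact_mod_cast this
end

section
/- Suppose n = 2m. For any potential outcome table w and any t > 0, the Neyman estimator under the uniform random balanced assignment satisfies the tail bound P(|T(w, Z) − τ(w)| ≥ t) ≤ 2 exp(−t² n / 8). Consequently, for any observed data, any table w with |T(Y,Z) − τ(w)| ≥ √(8 log(2/α)/n) has permutation p-value p(w, Y, Z) < α. -/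
open Finset

/-!
With `a_j = w_j(0) + w_j(1) ∈ [0, 2]` one has `m (T − τ) = ∑ a_j Z_j − (∑ a_j) / 2`. A uniform
balanced assignment arises from a uniform bijection of the subjects with `m` ordered pairs
followed by independent fair coins choosing the treated member of each pair, because every
balanced assignment has the same number of preimages. Given the pairing, `m (T − τ)` is a
Rademacher sum with coefficients in `[−1, 1]`, so the Chernoff bound with
`cosh x ≤ exp (x² / 2)` gives `P(|T − τ| ≥ t) ≤ 2 exp (−m t² / 2) = 2 exp (−t² n / 4)`.
At `t = √(8 log (2/α) / n)` this is `α² / 2 < α`, which bounds the p-value.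
-/

open Real

section Rademacher

variable {ι : Type*} [Fintype ι]

def rademacherSum (b : ι → ℝ) (ε : ι → Bool) : ℝ :=
  ∑ i, if ε i then b i else -b i

lemma rademacherSum_neg (b : ι → ℝ) (ε : ι → Bool) :
    rademacherSum (-b) ε = -rademacherSum b ε := by
  rw [rademacherSum, rademacherSum, ← sum_neg_distrib]
  refine sum_congr rfl fun i _ => ?_
  cases ε i <;> simp

variable [DecidableEq ι]

lemma sum_exp_mul_rademacherSum (b : ι → ℝ) (l : ℝ) :
    ∑ ε : ι → Bool, exp (l * rademacherSum b ε) = ∏ i, 2 * cosh (l * b i) := by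
  simp_rw [rademacherSum, mul_sum, exp_sum]
  rw [← Fintype.prod_sum fun i (c : Bool) => exp (l * if c then b i else -b i)]
  refine prod_congr rfl fun i _ => ?_
  rw [Fintype.sum_bool, cosh_eq]
  simp only [if_true, Bool.false_eq_true, if_false, mul_neg]
  ring

lemma sum_exp_mul_rademacherSum_le {b : ι → ℝ} (hb : ∀ i, |b i| ≤ 1) (l : ℝ) :
    ∑ ε : ι → Bool, exp (l * rademacherSum b ε) ≤
      2 ^ Fintype.card ι * exp (Fintype.card ι * l ^ 2 / 2) := by
  have hfactor (i : ι) : 2 * cosh (l * b i) ≤ 2 * exp (l ^ 2 / 2) := by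
    have hb2 : b i ^ 2 ≤ 1 := sq_le_one_iff_abs_le_one _ |>.2 (hb i)
    have : (l * b i) ^ 2 ≤ l ^ 2 := by nlinarith [sq_nonneg l]
    gcongr
    exact (cosh_le_exp_half_sq _).trans (exp_le_exp.2 (by linarith))
  calc ∑ ε : ι → Bool, exp (l * rademacherSum b ε) = ∏ i, 2 * cosh (l * b i) :=
        sum_exp_mul_rademacherSum b l
    _ ≤ ∏ _i : ι, 2 * exp (l ^ 2 / 2) :=
        prod_le_prod (fun i _ => by positivity) fun i _ => hfactor i
    _ = 2 ^ Fintype.card ι * exp (Fintype.card ι * l ^ 2 / 2) := by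
        rw [prod_const, card_univ, mul_pow, ← exp_nat_mul]
        ring_nf

lemma card_le_rademacherSum_le {b : ι → ℝ} (hb : ∀ i, |b i| ≤ 1) {s : ℝ} (hs : 0 < s) :
    (#{ε | s ≤ rademacherSum b ε} : ℝ) ≤
      2 ^ Fintype.card ι * exp (-(s ^ 2 / (2 * Fintype.card ι))) := by
  rcases (Fintype.card ι).eq_zero_or_pos with hι | hι
  · have : #{ε | s ≤ rademacherSum b ε} ≤ 1 := (card_filter_le _ _).trans_eq (by simp [hι])
    simpa [hι] using this
  have hk : (0 : ℝ) < Fintype.card ι := by exact_mod_cast hι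
  -- Chernoff's bound, at the optimal parameter.
  set l := s / Fintype.card ι with hl
  have markov : (#{ε | s ≤ rademacherSum b ε} : ℝ) * exp (l * s) ≤
      ∑ ε : ι → Bool, exp (l * rademacherSum b ε) := by
    rw [← nsmul_eq_mul]
    refine (card_nsmul_le_sum _ _ _ fun ε hε => ?_).trans
      (sum_le_univ_sum_of_nonneg fun _ => (exp_pos _).le)
    exact exp_le_exp.2 (mul_le_mul_of_nonneg_left (mem_filter.1 hε).2 (by positivity))
  have hexp : 2 ^ Fintype.card ι * exp (Fintype.card ι * l ^ 2 / 2) / exp (l * s) =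
      2 ^ Fintype.card ι * exp (-(s ^ 2 / (2 * Fintype.card ι))) := by
    rw [mul_div_assoc, ← exp_sub]
    congr 2
    rw [hl]
    field_simp
    ring
  rw [← hexp, le_div_iff₀ (exp_pos _)]
  exact markov.trans (sum_exp_mul_rademacherSum_le hb l)

lemma card_le_abs_rademacherSum_le {b : ι → ℝ} (hb : ∀ i, |b i| ≤ 1) {s : ℝ} (hs : 0 < s) :
    (#{ε | s ≤ |rademacherSum b ε|} : ℝ) ≤
      2 * (2 ^ Fintype.card ι * exp (-(s ^ 2 / (2 * Fintype.card ι)))) := by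
  set A : Finset (ι → Bool) := {ε | s ≤ rademacherSum b ε}
  set B : Finset (ι → Bool) := {ε | s ≤ rademacherSum (-b) ε}
  have hsub : ({ε | s ≤ |rademacherSum b ε|} : Finset _) ⊆ A ∪ B := by
    intro ε
    simp [A, B, rademacherSum_neg, le_abs]
  have hA : (#A : ℝ) ≤ _ := card_le_rademacherSum_le hb hs
  have hB : (#B : ℝ) ≤ _ := card_le_rademacherSum_le (b := -b) (fun i => by simpa using hb i) hs
  calc (#{ε | s ≤ |rademacherSum b ε|} : ℝ) ≤ #(A ∪ B) := by exact_mod_cast card_le_card hsub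
    _ ≤ #A + #B := by exact_mod_cast card_union_le _ _
    _ ≤ _ := by linarith

end Rademacher

lemma card_filter_comp_div_card {α β : Type*} [Fintype α] [Nonempty α] [DecidableEq β]
    {g : α → β} {s : Finset β} (hg : ∀ a, g a ∈ s)
    (hfiber : ∀ b ∈ s, ∀ b' ∈ s, #{a | g a = b} = #{a | g a = b'})
    (P : β → Prop) [DecidablePred P] :
    (#{a | P (g a)} : ℝ) / Fintype.card α = #(s.filter P) / #s := by
  obtain ⟨a₀⟩ := ‹Nonempty α›
  set c := #{a | g a = g a₀}
  have hc (b) (hb : b ∈ s) : #{a | g a = b} = c := hfiber b hb _ (hg a₀)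
  have hc0 : (c : ℝ) ≠ 0 := by
    have : 0 < c := card_pos.2 ⟨a₀, by simp⟩
    positivity
  have hcard : Fintype.card α = #s * c := by
    rw [← card_univ, card_eq_sum_card_fiberwise fun a _ => hg a, sum_congr rfl hc, sum_const,
      smul_eq_mul]
  have hcardP : #{a | P (g a)} = #(s.filter P) * c := by
    rw [card_eq_sum_card_fiberwise (t := s.filter P) fun a ha =>
      mem_filter.2 ⟨hg a, (mem_filter.1 ha).2⟩]
    refine (sum_congr rfl fun b hb => ?_).trans (by rw [sum_const, smul_eq_mul])
    rw [filter_filter, ← hc b (mem_filter.1 hb).1]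
    congr 1
    exact filter_congr fun a _ => and_iff_right_of_imp fun hab => hab ▸ (mem_filter.1 hb).2
  rw [hcard, hcardP]
  push_cast
  exact mul_div_mul_right _ _ hc0

lemma exists_perm_comp_eq {α : Type*} [Fintype α] [DecidableEq α] {z z' : α → Bool}
    (h : #{j | z j = true} = #{j | z' j = true}) :
    ∃ σ : Equiv.Perm α, ∀ j, z (σ j) = z' j := by
  have hfiber (c : Bool) : Nonempty ({j // z' j = c} ≃ {j // z j = c}) := by
    refine Fintype.card_eq.1 ?_
    simp only [Fintype.card_subtype]
    cases c
    · simp only [← Bool.not_eq_true]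
      rw [filter_not, filter_not, card_sdiff_of_subset (filter_subset _ _),
        card_sdiff_of_subset (filter_subset _ _), h]
    · exact h.symm
  exact ⟨Equiv.ofFiberEquiv fun c => (hfiber c).some, Equiv.ofFiberEquiv_map _⟩

section Pairing

variable {n m : ℕ}

/-- The subjects are split into `m` ordered pairs by `d.1`, and in pair `i` the member with
label `d.2 i` is treated. -/
def pairedAssign (d : (Fin n ≃ Fin m × Bool) × (Fin m → Bool)) : Fin n → Bool :=
  fun j => (d.1 j).2 == d.2 (d.1 j).1

lemma pairedAssign_mem_assign (d : (Fin n ≃ Fin m × Bool) × (Fin m → Bool)) :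
    pairedAssign d ∈ Assign n m := by
  obtain ⟨f, ε⟩ := d
  refine mem_filter.2 ⟨mem_univ _, ?_⟩
  refine (card_nbij' (fun j => (f j).1) (fun i => f.symm (i, ε i)) ?_ ?_ ?_ ?_).trans
    (card_fin m)
  · simp
  · simp [pairedAssign]
  · intro j hj
    have : (f j).2 = ε (f j).1 := by simpa [pairedAssign] using hj
    simp [← this]
  · intro i _
    simp

lemma card_fiber_pairedAssign_le {z z' : Fin n → Bool}
    (h : #{j | z j = true} = #{j | z' j = true}) :
    #{d | pairedAssign (m := m) d = z} ≤ #{d | pairedAssign (m := m) d = z'} := by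
  obtain ⟨σ, hσ⟩ := exists_perm_comp_eq h
  refine card_le_card_of_injOn (fun d => (σ.trans d.1, d.2)) (fun d hd => ?_) fun d _ d' _ h => ?_
  · have hd : pairedAssign d = z := (mem_filter.1 hd).2
    simp only [coe_filter, Set.mem_ofPred_eq, mem_univ, true_and]
    funext j
    rw [← hσ j, ← hd]
    rfl
  · obtain ⟨h₁, h₂⟩ := Prod.ext_iff.1 h
    exact Prod.ext (Equiv.ext fun j => by simpa using congrArg (· (σ.symm j)) h₁) h₂

lemma card_fiber_pairedAssign_eq {z z' : Fin n → Bool} (hz : z ∈ Assign n m)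
    (hz' : z' ∈ Assign n m) :
    #{d | pairedAssign (m := m) d = z} = #{d | pairedAssign (m := m) d = z'} := by
  have h : #{j | z j = true} = #{j | z' j = true} :=
    (mem_filter.1 hz).2.trans (mem_filter.1 hz').2.symm
  exact (card_fiber_pairedAssign_le h).antisymm (card_fiber_pairedAssign_le h.symm)

lemma Pr_eq_card_pairedAssign [Nonempty (Fin n ≃ Fin m × Bool)]
    (P : (Fin n → Bool) → Prop) [DecidablePred P] :
    Pr n m P = #{d | P (pairedAssign (m := m) d)} /
      Fintype.card ((Fin n ≃ Fin m × Bool) × (Fin m → Bool)) := by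
  rw [Pr, filter_congr_decidable]
  exact (card_filter_comp_div_card pairedAssign_mem_assign
    (fun _ hz _ hz' => card_fiber_pairedAssign_eq hz hz') P).symm

lemma sum_mul_pairedAssign_sub_half (a : Fin n → ℝ) (f : Fin n ≃ Fin m × Bool)
    (ε : Fin m → Bool) :
    ∑ j, a j * b2r (pairedAssign (f, ε) j) - (∑ j, a j) / 2 =
      rademacherSum (fun i => (a (f.symm (i, true)) - a (f.symm (i, false))) / 2) ε := by
  rw [sum_div, ← sum_sub_distrib, ← f.symm.sum_comp, Fintype.sum_prod_type, rademacherSum]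
  refine sum_congr rfl fun i _ => ?_
  cases hε : ε i <;> simp [pairedAssign, b2r, hε] <;> ring

end Pairing

lemma Pr_mono {n m : ℕ} {P Q : (Fin n → Bool) → Prop} (h : ∀ z, P z → Q z) :
    Pr n m P ≤ Pr n m Q := by
  classical
  rw [Pr, Pr, filter_congr_decidable, filter_congr_decidable]
  gcongr
  exact h _

section Neyman

variable {m : ℕ}

lemma neyman_obsOutcome_sub_sate (hm : 0 < m) (w : Fin (2 * m) → Bool × Bool)
    (z : Fin (2 * m) → Bool) :
    neyman (2 * m) m (obsOutcome (2 * m) w z) z - sate (2 * m) w =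
      (∑ j, (b2r (w j).2 + b2r (w j).1) * b2r (z j) -
        (∑ j, (b2r (w j).2 + b2r (w j).1)) / 2) / m := by
  have hm' : (m : ℝ) ≠ 0 := by positivity
  have htreated (j) : (if z j then b2r (obsOutcome (2 * m) w z j) else 0) =
      b2r (w j).2 * b2r (z j) := by
    cases hz : z j <;> simp [obsOutcome, b2r, hz]
  have hcontrol (j) : (if z j then 0 else b2r (obsOutcome (2 * m) w z j)) =
      b2r (w j).1 - b2r (w j).1 * b2r (z j) := by
    cases hz : z j <;> simp [obsOutcome, b2r, hz]
  simp only [neyman, sate, htreated, hcontrol, add_mul, sum_add_distrib, sum_sub_distrib]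
  push_cast
  field_simp
  ring

lemma Pr_le_abs_neyman_sub_sate_le (hm : 0 < m) (w : Fin (2 * m) → Bool × Bool) {t : ℝ}
    (ht : 0 < t) :
    Pr (2 * m) m (fun z => t ≤ |neyman (2 * m) m (obsOutcome (2 * m) w z) z - sate (2 * m) w|) ≤
      2 * exp (-(m * t ^ 2 / 2)) := by
  classical
  have : Nonempty (Fin (2 * m) ≃ Fin m × Bool) := Fintype.card_eq.1 (by simp [mul_comm])
  have hm' : (0 : ℝ) < m := by exact_mod_cast hm
  set a : Fin (2 * m) → ℝ := fun j => b2r (w j).2 + b2r (w j).1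
  set b : (Fin (2 * m) ≃ Fin m × Bool) → Fin m → ℝ :=
    fun f i => (a (f.symm (i, true)) - a (f.symm (i, false))) / 2
  have ha (j) : 0 ≤ a j ∧ a j ≤ 2 := by
    simp only [a]
    cases (w j).1 <;> cases (w j).2 <;> norm_num [b2r]
  have hb (f i) : |b f i| ≤ 1 := by
    obtain ⟨h₁, h₁'⟩ := ha (f.symm (i, true))
    obtain ⟨h₂, h₂'⟩ := ha (f.symm (i, false))
    simp only [b, abs_le]
    constructor <;> linarith
  have hevent (f ε) : t ≤ |neyman (2 * m) m (obsOutcome (2 * m) w (pairedAssign (f, ε)))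
      (pairedAssign (f, ε)) - sate (2 * m) w| ↔ m * t ≤ |rademacherSum (b f) ε| := by
    rw [neyman_obsOutcome_sub_sate hm, sum_mul_pairedAssign_sub_half a, abs_div,
      abs_of_pos hm', le_div_iff₀ hm', mul_comm]
  have hcount : #{d | t ≤ |neyman (2 * m) m (obsOutcome (2 * m) w (pairedAssign (m := m) d))
      (pairedAssign d) - sate (2 * m) w|} = ∑ f, #{ε | m * t ≤ |rademacherSum (b f) ε|} := by
    simp only [card_filter, Fintype.sum_prod_type, hevent]
  have hbound (f) : (#{ε | m * t ≤ |rademacherSum (b f) ε|} : ℝ) ≤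
      2 * (2 ^ m * exp (-(m * t ^ 2 / 2))) := by
    convert card_le_abs_rademacherSum_le (hb f) (by positivity : (0 : ℝ) < m * t) using 4
    · simp
    · simp only [Fintype.card_fin]
      field_simp
  rw [Pr_eq_card_pairedAssign, hcount, Fintype.card_prod, Fintype.card_fun, Fintype.card_bool,
    Fintype.card_fin, div_le_iff₀ (by positivity)]
  push_cast
  calc ∑ f, (#{ε | m * t ≤ |rademacherSum (b f) ε|} : ℝ)
      ≤ ∑ _f : Fin (2 * m) ≃ Fin m × Bool, 2 * (2 ^ m * exp (-(m * t ^ 2 / 2))) :=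
        sum_le_sum fun f _ => hbound f
    _ = _ := by rw [sum_const, card_univ, nsmul_eq_mul]; ring

end Neyman

/-- In a balanced design: (a) the Neyman estimator satisfies the tail
bound `P(|T(w, Z) − τ(w)| ≥ t) ≤ 2 exp(−t² n / 8)` for every `t > 0`; consequently (b)
for any observed data, any table `w` with `|T(Y,Z) − τ(w)| ≥ √(8 log(2/α)/n)` has
permutation `p`-value `p(w, Y, Z) < α`. -/
theorem stmt18 (m : ℕ) (hm : 0 < m) (n : ℕ) (hn : n = 2 * m)
    (w : Fin n → Bool × Bool) :
    (∀ t : ℝ, 0 < t →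
      Pr n m (fun z => t ≤ |neyman n m (obsOutcome n w z) z - sate n w|) ≤
        2 * Real.exp (-(t ^ 2 * (n : ℝ) / 8))) ∧
      ∀ α : ℝ, 0 < α → α < 1 → ∀ Y z : Fin n → Bool, z ∈ Assign n m →
        Real.sqrt (8 * Real.log (2 / α) / (n : ℝ)) ≤ |neyman n m Y z - sate n w| →
        pval n m w Y z < α := by
  subst hn
  have hm' : (0 : ℝ) < m := by exact_mod_cast hm
  refine ⟨fun t ht => (Pr_le_abs_neyman_sub_sate_le hm w ht).trans ?_,
    fun α hα hα1 Y z _ hobs => ?_⟩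
  · refine mul_le_mul_of_nonneg_left (exp_le_exp.2 ?_) zero_le_two
    push_cast
    nlinarith [mul_pos hm' (pow_pos ht 2)]
  have hlog : 0 < log (2 / α) := log_pos (by rw [lt_div_iff₀ hα]; linarith)
  set t₀ := √(8 * log (2 / α) / ((2 * m : ℕ) : ℝ))
  have ht₀ : t₀ ^ 2 = 8 * log (2 / α) / (2 * m) := by
    rw [sq_sqrt (by positivity)]
    push_cast
    rfl
  have htail : 2 * exp (-(m * t₀ ^ 2 / 2)) = α ^ 2 / 2 := by
    rw [ht₀, show -(m * (8 * log (2 / α) / (2 * m)) / 2) = -log (2 / α) + -log (2 / α) by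
      field_simp; ring, exp_add, exp_neg, exp_log (by positivity), inv_div]
    ring
  have hpval : pval (2 * m) m w Y z ≤ α ^ 2 / 2 :=
    (Pr_mono fun z' hz' => hobs.trans hz').trans
      (htail ▸ Pr_le_abs_neyman_sub_sate_le hm w (by positivity))
  nlinarith
end

section
/- A potential outcome table w with count vector v = (v₁₁, v₁₀, v₀₁, v₀₀) is possible given the observed count vector n⃗ = (n₁₁, n₁₀, n₀₁, n₀₀) if and only if max(0, n₁₁ − v₁₀, v₁₁ − n₀₁, v₁₁ + v₀₁ − n₁₀ − n₀₁) ≤ min(v₁₁, n₁₁, v₁₁ + v₀₁ − n₀₁, n − v₁₀ − n₀₁ − n₁₀). -/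
open Finset

/-!
A possible table is the observed data completed by an arbitrary choice `f` of the unobserved
outcomes. Its counts depend only on the numbers `x_zy` of subjects in each observed cell `(z, y)`
whose unobserved outcome is `1`, and each `x_zy` can take any value in `[0, n_zy]`. The count
equations determine `x₁₀, x₀₁, x₀₀` from `x₁₁`, and the criterion says exactly that the resulting
interval of admissible values of `x₁₁` is nonempty.
-/

def completeTable {n : ℕ} (Y z f : Fin n → Bool) : Fin n → Bool × Bool :=
  fun j => if z j then (f j, Y j) else (Y j, f j)

theorem possibleTable_iff_exists_completeTable {n : ℕ} {w : Fin n → Bool × Bool}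
    {Y z : Fin n → Bool} : PossibleTable n w Y z ↔ ∃ f, w = completeTable Y z f := by
  constructor
  · intro hw
    refine ⟨fun j => if z j then (w j).1 else (w j).2, funext fun j => ?_⟩
    cases hzj : z j
    · simp [completeTable, hzj, ← (hw j).2 hzj]
    · simp [completeTable, hzj, ← (hw j).1 hzj]
  · rintro ⟨f, rfl⟩ j
    cases hzj : z j <;> simp [completeTable, hzj]

def cellCount {n : ℕ} (Y z f : Fin n → Bool) (a b c : Bool) : ℕ :=
  #{j | z j = a ∧ Y j = b ∧ f j = c}

theorem ncount_eq_cellCount_add {n : ℕ} (Y z f : Fin n → Bool) (a b : Bool) :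
    ncount n Y z a b = cellCount Y z f a b true + cellCount Y z f a b false := by
  simp only [ncount, cellCount, card_filter, ← sum_add_distrib]
  refine sum_congr rfl fun j _ => ?_
  cases f j <;> simp

theorem vcount_completeTable {n : ℕ} (Y z f : Fin n → Bool) (a b : Bool) :
    vcount n (completeTable Y z f) a b = cellCount Y z f true a b + cellCount Y z f false b a := by
  simp only [vcount, cellCount, card_filter, ← sum_add_distrib]
  refine sum_congr rfl fun j _ => ?_
  cases hzj : z j <;> simp [completeTable, hzj, and_comm]

theorem ncount_sum {n : ℕ} (Y z : Fin n → Bool) :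
    ncount n Y z true true + ncount n Y z true false + ncount n Y z false true
      + ncount n Y z false false = n := by
  have := card_eq_sum_card_fiberwise (s := univ) (t := univ)
    (f := fun j : Fin n => (z j, Y j)) fun _ _ => mem_univ _
  simp only [card_univ, Fintype.card_fin, Fintype.sum_prod_type, Fintype.sum_bool,
    Prod.mk.injEq] at this
  simp only [ncount]
  omega

theorem exists_bool_fun_card_fiber_eq {ι K : Type*} [Fintype ι] [DecidableEq ι] [DecidableEq K]
    (κ : ι → K) (x : K → ℕ) (hx : ∀ k, x k ≤ #{j | κ j = k}) :
    ∃ f : ι → Bool, ∀ k, #{j | κ j = k ∧ f j = true} = x k := by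
  choose S hS hcard using fun k => exists_subset_card_eq (hx k)
  refine ⟨fun j => decide (j ∈ S (κ j)), fun k => ?_⟩
  rw [← hcard k]
  congr 1
  ext j
  simp only [mem_filter, mem_univ, true_and, decide_eq_true_eq]
  constructor
  · rintro ⟨rfl, hj⟩
    exact hj
  · intro hj
    have hκ : κ j = k := (mem_filter.1 (hS k hj)).2
    exact ⟨hκ, hκ ▸ hj⟩

theorem exists_cellCount_eq {n : ℕ} (Y z : Fin n → Bool) (x : Bool → Bool → ℕ)
    (hx : ∀ a b, x a b ≤ ncount n Y z a b) :
    ∃ f, ∀ a b, cellCount Y z f a b true = x a b := by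
  have hfiber (a b : Bool) (f : Fin n → Bool) :
      #{j | (z j, Y j) = (a, b) ∧ f j = true} = cellCount Y z f a b true := by
    simp only [cellCount, Prod.mk.injEq, and_assoc]
  obtain ⟨f, hf⟩ := exists_bool_fun_card_fiber_eq (fun j => (z j, Y j)) (fun k => x k.1 k.2)
    fun ⟨a, b⟩ => by simpa only [ncount, Prod.mk.injEq] using hx a b
  exact ⟨f, fun a b => hfiber a b f ▸ hf (a, b)⟩

/-- `xᵢⱼ` is the number of subjects in the observed cell `(i, j)` whose unobserved outcome
is `1`. -/
theorem exists_cell_split_iff {n n11 n10 n01 n00 v11 v10 v01 v00 : ℕ}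
    (hn : n11 + n10 + n01 + n00 = n) (hv : v11 + v10 + v01 + v00 = n) :
    (∃ x11 x10 x01 x00 : ℕ, x11 ≤ n11 ∧ x10 ≤ n10 ∧ x01 ≤ n01 ∧ x00 ≤ n00 ∧
        x11 + x01 = v11 ∧ n11 - x11 + x00 = v10 ∧ x10 + (n01 - x01) = v01 ∧
        n10 - x10 + (n00 - x00) = v00) ↔
      max (max 0 ((n11 : ℤ) - v10)) (max ((v11 : ℤ) - n01) ((v11 : ℤ) + v01 - n10 - n01)) ≤
        min (min (v11 : ℤ) n11) (min ((v11 : ℤ) + v01 - n01) ((n : ℤ) - v10 - n01 - n10)) := by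
  constructor
  · rintro ⟨x11, x10, x01, x00, h⟩
    omega
  · intro h
    -- everything is determined by `x11`; take its least admissible value
    set x11 := (max (max 0 ((n11 : ℤ) - v10))
      (max ((v11 : ℤ) - n01) ((v11 : ℤ) + v01 - n10 - n01))).toNat
    exact ⟨x11, v11 + v01 - n01 - x11, v11 - x11, v10 + x11 - n11, by omega⟩

theorem stmt19_general (n : ℕ)
    (Y z : Fin n → Bool)
    (v11 v10 v01 v00 : ℕ) (hsum : v11 + v10 + v01 + v00 = n) :
    (∃ w : Fin n → Bool × Bool, PossibleTable n w Y z ∧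
        vcount n w true true = v11 ∧ vcount n w true false = v10 ∧
        vcount n w false true = v01 ∧ vcount n w false false = v00) ↔
      max (max 0 ((ncount n Y z true true : ℤ) - (v10 : ℤ)))
          (max ((v11 : ℤ) - (ncount n Y z false true : ℤ))
            ((v11 : ℤ) + (v01 : ℤ) - (ncount n Y z true false : ℤ) -
              (ncount n Y z false true : ℤ))) ≤
        min (min (v11 : ℤ) (ncount n Y z true true : ℤ))
          (min ((v11 : ℤ) + (v01 : ℤ) - (ncount n Y z false true : ℤ))
            ((n : ℤ) - (v10 : ℤ) - (ncount n Y z false true : ℤ) -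
              (ncount n Y z true false : ℤ))) := by
  rw [← exists_cell_split_iff (ncount_sum Y z) hsum]
  simp only [possibleTable_iff_exists_completeTable]
  constructor
  · rintro ⟨w, ⟨f, rfl⟩, h11, h10, h01, h00⟩
    simp only [vcount_completeTable] at h11 h10 h01 h00
    refine ⟨cellCount Y z f true true true, cellCount Y z f true false true,
      cellCount Y z f false true true, cellCount Y z f false false true, ?_⟩
    simp only [ncount_eq_cellCount_add Y z f]
    omega
  · rintro ⟨x11, x10, x01, x00, hx11, hx10, hx01, hx00, hv⟩
    obtain ⟨f, hf⟩ := exists_cellCount_eq Y z (fun a b => bif a then bif b then x11 else x10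
      else bif b then x01 else x00) (by rintro (_ | _) (_ | _) <;> assumption)
    simp only [Bool.forall_bool, cond_true, cond_false] at hf
    simp only [ncount_eq_cellCount_add Y z f] at hx11 hx10 hx01 hx00 hv
    refine ⟨_, ⟨f, rfl⟩, ?_⟩
    simp only [vcount_completeTable]
    omega

/-- Li–Ding criterion. A count vector `v = (v₁₁, v₁₀, v₀₁, v₀₀)` is
possible given the observed count vector `n⃗ = (n₁₁, n₁₀, n₀₁, n₀₀)` (i.e. some table
possible given the observed data has these counts) if and only if
`max(0, n₁₁ − v₁₀, v₁₁ − n₀₁, v₁₁ + v₀₁ − n₁₀ − n₀₁)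
  ≤ min(v₁₁, n₁₁, v₁₁ + v₀₁ − n₀₁, n − v₁₀ − n₀₁ − n₁₀)`. -/
theorem stmt19 (n m : ℕ) (hm : 0 < m) (hmn : m < n)
    (Y z : Fin n → Bool) (hz : z ∈ Assign n m)
    (v11 v10 v01 v00 : ℕ) (hsum : v11 + v10 + v01 + v00 = n) :
    (∃ w : Fin n → Bool × Bool, PossibleTable n w Y z ∧
        vcount n w true true = v11 ∧ vcount n w true false = v10 ∧
        vcount n w false true = v01 ∧ vcount n w false false = v00) ↔
      max (max 0 ((ncount n Y z true true : ℤ) - (v10 : ℤ)))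
          (max ((v11 : ℤ) - (ncount n Y z false true : ℤ))
            ((v11 : ℤ) + (v01 : ℤ) - (ncount n Y z true false : ℤ) -
              (ncount n Y z false true : ℤ))) ≤
        min (min (v11 : ℤ) (ncount n Y z true true : ℤ))
          (min ((v11 : ℤ) + (v01 : ℤ) - (ncount n Y z false true : ℤ))
            ((n : ℤ) - (v10 : ℤ) - (ncount n Y z false true : ℤ) -
              (ncount n Y z true false : ℤ))) :=
  stmt19_general n Y z v11 v10 v01 v00 hsum
end
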